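/- The ideal I = m·I_{(6;3,2,1,4)} in K[x_1,x_2,x_3,x_4], where m = (x_1,x_2,x_3,x_4), does not have the strong exchange property: x_1^4x_2^2x_3 and x_2^3x_4^4 are minimal generators of I, but x_1^4x_2^3 is not a minimal generator of I. -/

import Mathlib

/-- A monomial in `K[x_1,...,x_n]` is identified with its exponent vector. -/
abbrev Mon (n : ℕ) := Fin n → ℕ

/-- Total degree of a monomial. -/
def degree {n : ℕ} (u : Mon n) : ℕ := ∑ i, u i

/-- A monomial ideal is identified with the set of exponent vectors of the monomials it
contains; this set is closed under multiplication by monomials. -/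
def IsMonomialIdeal {n : ℕ} (I : Set (Mon n)) : Prop :=
  ∀ u ∈ I, ∀ w : Mon n, u + w ∈ I

/-- The minimal monomial generating set `G(I)` of a monomial ideal: monomials of `I`
minimal with respect to divisibility (pointwise `≤` of exponent vectors). -/
def minGens {n : ℕ} (I : Set (Mon n)) : Set (Mon n) :=
  {u | u ∈ I ∧ ∀ v ∈ I, v ≤ u → v = u}

/-- `exch v i j` is the exponent vector of `x_j * (v / x_i)` (for `i ≠ j`). -/
def exch {n : ℕ} (v : Mon n) (i j : Fin n) : Mon n :=
  fun k => if k = i then v k - 1 else if k = j then v k + 1 else v k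

/-- `component I d` is the ideal `I_⟨d⟩` generated by the degree-`d` monomials of `I`. -/
def component {n : ℕ} (I : Set (Mon n)) (d : ℕ) : Set (Mon n) :=
  {w | ∃ u ∈ I, degree u = d ∧ u ≤ w}

/-- `I` is generated in a single degree. -/
def GeneratedInSingleDegree {n : ℕ} (I : Set (Mon n)) : Prop :=
  ∃ d, ∀ u ∈ minGens I, degree u = d

/-- A polymatroidal ideal: generated in a single degree and its generators satisfy the
exchange property. -/
def IsPolymatroidal {n : ℕ} (I : Set (Mon n)) : Prop :=
  GeneratedInSingleDegree I ∧
  ∀ u ∈ minGens I, ∀ v ∈ minGens I, ∀ i : Fin n, v i < u i →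
    ∃ j : Fin n, u j < v j ∧ exch u i j ∈ I

/-- Componentwise polymatroidal: each graded component ideal `I_⟨d⟩` is polymatroidal. -/
def ComponentwisePolymatroidal {n : ℕ} (I : Set (Mon n)) : Prop :=
  ∀ d : ℕ, IsPolymatroidal (component I d)

/-- Non-pure dual exchange property: for `u, v ∈ G(I)` with `deg u ≤ deg v` and
`deg_{x_i} v < deg_{x_i} u` there is `j` with `deg_{x_j} v > deg_{x_j} u` and
`x_i * (v / x_j) ∈ I`. -/
def NonPureDualExchange {n : ℕ} (I : Set (Mon n)) : Prop :=
  ∀ u ∈ minGens I, ∀ v ∈ minGens I, degree u ≤ degree v →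
    ∀ i : Fin n, v i < u i → ∃ j : Fin n, u j < v j ∧ exch v j i ∈ I

/-- Non-pure exchange property: for `u, v ∈ G(I)` with `deg u ≤ deg v` and
`deg_{x_i} v > deg_{x_i} u` there is `j` with `deg_{x_j} v < deg_{x_j} u` and
`x_j * (v / x_i) ∈ I`. -/
def NonPureExchange {n : ℕ} (I : Set (Mon n)) : Prop :=
  ∀ u ∈ minGens I, ∀ v ∈ minGens I, degree u ≤ degree v →
    ∀ i : Fin n, u i < v i → ∃ j : Fin n, v j < u j ∧ exch v i j ∈ I

/-- The monomial ideal generated by a set `G` of monomials. -/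
def genBy {n : ℕ} (G : Set (Mon n)) : Set (Mon n) := {w | ∃ u ∈ G, u ≤ w}

/-- The product of two monomial ideals (as sets of monomials). -/
def mulIdeal {n : ℕ} (I J : Set (Mon n)) : Set (Mon n) :=
  {w | ∃ u ∈ I, ∃ v ∈ J, w = u + v}

/-- The product of a monomial ideal with the monomial `u`. -/
def mulMon {n : ℕ} (u : Mon n) (I : Set (Mon n)) : Set (Mon n) :=
  (fun v => u + v) '' I

/-- Strong exchange property: for all generators `u, v` and all `i, j` with
`deg_{x_i} u > deg_{x_i} v` and `deg_{x_j} u < deg_{x_j} v`, `x_j * (u / x_i) ∈ I`. -/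
def StrongExchange {n : ℕ} (I : Set (Mon n)) : Prop :=
  ∀ u ∈ minGens I, ∀ v ∈ minGens I, ∀ i j : Fin n,
    v i < u i → u j < v j → exch u i j ∈ I

/-- The Veronese type ideal `I_{(d; a_1,...,a_n)}`: generated by all monomials of
degree `d` with `deg_{x_i} ≤ a i` for all `i`. -/
def veronese (n d : ℕ) (a : Fin n → ℕ) : Set (Mon n) :=
  {w | ∃ u : Mon n, degree u = d ∧ (∀ i, u i ≤ a i) ∧ u ≤ w}

/-- A list of monomials is an admissible order if each colon ideal
`(u_1,...,u_{i-1}) : u_i` is generated by a subset `S` of the variables. -/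
def AdmissibleOrder {n : ℕ} (L : List (Mon n)) : Prop :=
  ∀ i : Fin L.length, ∃ S : Set (Fin n),
    ∀ w : Mon n, (w + L.get i ∈ genBy {u | u ∈ L.take i.1}) ↔ ∃ k ∈ S, 1 ≤ w k

/-- `I` has linear quotients: some ordering of `G(I)` is admissible. -/
def HasLinearQuotients {n : ℕ} (I : Set (Mon n)) : Prop :=
  ∃ L : List (Mon n), L.Nodup ∧ (∀ u, u ∈ L ↔ u ∈ minGens I) ∧ AdmissibleOrder L

/-- `I` can be extended by linear quotients to `J`: `G(I) ⊆ G(J)` and the elements of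
`G(J) \ G(I)` can be ordered `v_1,...,v_m` such that each colon ideal
`(G(I), v_1,...,v_i) : v_{i+1}` is generated by a subset of the variables. -/
def ExtendsByLinearQuotients {n : ℕ} (I J : Set (Mon n)) : Prop :=
  I ⊆ J ∧ minGens I ⊆ minGens J ∧
  ∃ L : List (Mon n), L.Nodup ∧ (∀ u, u ∈ L ↔ u ∈ minGens J ∧ u ∉ minGens I) ∧
    ∀ i : Fin L.length, ∃ S : Set (Fin n),
      ∀ w : Mon n,
        (w + L.get i ∈ genBy (minGens I ∪ {u | u ∈ L.take i.1})) ↔ ∃ k ∈ S, 1 ≤ w k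

/-- The minimal generators of `I ⊆ K[x,y]` are `u_i = x^{a i} y^{b i}`, `i = 0,...,m`,
with `a` strictly decreasing, `b` strictly increasing, `a m = 0` and `b 0 = 0`
(so `I` is `(x,y)`-primary). -/
def yxTightGens (m : ℕ) (a b : ℕ → ℕ) (I : Set (Mon 2)) : Prop :=
  (∀ i k : ℕ, i ≤ m → k ≤ m → i < k → a k < a i ∧ b i < b k) ∧
  a m = 0 ∧ b 0 = 0 ∧
  minGens I = {u | ∃ i ≤ m, u = ![a i, b i]}

/-- `I` is `x`-tight in `[0, r]`: the `x`-exponents of the generators are exactly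
`r, r-1, ..., 1, 0` (i.e. `a (r - i) = i`). -/
def xTight (I : Set (Mon 2)) (r : ℕ) : Prop :=
  ∃ b : ℕ → ℕ, yxTightGens r (fun i => r - i) b I

/-- `I` is `y`-tight in `[0, s]`: the `y`-exponents of the generators are exactly
`0, 1, ..., s`. -/
def yTight (I : Set (Mon 2)) (s : ℕ) : Prop :=
  ∃ a : ℕ → ℕ, yxTightGens s a (fun i => i) I

/-- `I` is `yx`-tight: there is `0 ≤ j ≤ m` with `b i = i` for `i = 0,...,j` and
`a (m - i) = i` for `i = 0,...,m-j`. -/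
def yxTight (I : Set (Mon 2)) : Prop :=
  ∃ (m : ℕ) (a b : ℕ → ℕ), yxTightGens m a b I ∧
    ∃ j ≤ m, (∀ i ≤ j, b i = i) ∧ ∀ i ≤ m - j, a (m - i) = i

/-- Powers of a monomial ideal. -/
def powIdeal {n : ℕ} (I : Set (Mon n)) : ℕ → Set (Mon n)
  | 0 => Set.univ
  | k + 1 => mulIdeal (powIdeal I k) I

/-- The ideal `I = m · I_{(6;3,2,1,4)}` where `m = (x_1,x_2,x_3,x_4)` is the maximal
ideal (all monomials with nonzero exponent vector). -/
def I19 : Set (Mon 4) := mulIdeal {w : Mon 4 | w ≠ 0} (veronese 4 6 ![3,2,1,4])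


/-!
Every monomial of `I = m · I_{(6;3,2,1,4)}` has degree at least `7`, so each degree-`7`
monomial of `I` is a minimal generator. On the other hand `I ⊆ I_{(6;3,2,1,4)}`, and a monomial
`w` of a Veronese type ideal `I_{(d;a)}` satisfies `d ≤ deg (min w a)`; for `w = x_1^4 x_2^3`
this bound is `5 < 6`. Hence the exchange `x_2 · (x_1^4 x_2^2 x_3 / x_3) = x_1^4 x_2^3` leaves `I`.
-/

open Finset

section Degree

variable {n : ℕ}

lemma degree_add (u v : Mon n) : degree (u + v) = degree u + degree v :=
  sum_add_distrib

lemma degree_mono {u v : Mon n} (h : u ≤ v) : degree u ≤ degree v :=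
  sum_le_sum fun i _ => h i

lemma eq_of_le_of_degree_le {u v : Mon n} (h : v ≤ u) (hd : degree u ≤ degree v) : v = u := by
  by_contra hne
  have hlt : v < u := lt_of_le_of_ne h hne
  obtain ⟨i, hi⟩ := Pi.lt_def.mp hlt |>.2
  have : degree v < degree u := sum_lt_sum (fun i _ => h i) ⟨i, mem_univ i, hi⟩
  omega

lemma one_le_degree_of_ne_zero {u : Mon n} (hu : u ≠ 0) : 1 ≤ degree u := by
  obtain ⟨i, hi⟩ := Function.ne_iff.mp hu
  exact (Nat.one_le_iff_ne_zero.mpr hi).trans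
    (single_le_sum (fun j _ => Nat.zero_le (u j)) (mem_univ i))

lemma mem_minGens_of_forall_degree_le {I : Set (Mon n)} {u : Mon n} (hu : u ∈ I)
    (h : ∀ w ∈ I, degree u ≤ degree w) : u ∈ minGens I :=
  ⟨hu, fun v hv hvu => eq_of_le_of_degree_le hvu (h v hv)⟩

end Degree

section Veronese

variable {n d : ℕ} {a : Fin n → ℕ}

lemma le_degree_inf_of_mem_veronese {w : Mon n} (hw : w ∈ veronese n d a) :
    d ≤ degree (w ⊓ a) := by
  obtain ⟨u, rfl, hua, huw⟩ := hw
  exact degree_mono (le_inf huw hua)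

lemma le_degree_of_mem_veronese {w : Mon n} (hw : w ∈ veronese n d a) : d ≤ degree w :=
  (le_degree_inf_of_mem_veronese hw).trans (degree_mono inf_le_left)

lemma mulIdeal_veronese_subset (I : Set (Mon n)) :
    mulIdeal I (veronese n d a) ⊆ veronese n d a := by
  rintro _ ⟨u, -, v, ⟨v', hd, hva, hv⟩, rfl⟩
  exact ⟨v', hd, hva, hv.trans le_add_self⟩

lemma succ_le_degree_of_mem_maximal_mul_veronese {w : Mon n}
    (hw : w ∈ mulIdeal {u : Mon n | u ≠ 0} (veronese n d a)) : d + 1 ≤ degree w := by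
  obtain ⟨u, hu, v, hv, rfl⟩ := hw
  rw [degree_add, add_comm (degree u)]
  exact add_le_add (le_degree_of_mem_veronese hv) (one_le_degree_of_ne_zero hu)

end Veronese

lemma mem_minGens_I19_of_degree_eq_seven {u : Mon 4} (hu : u ∈ I19) (hd : degree u = 7) :
    u ∈ minGens I19 :=
  mem_minGens_of_forall_degree_le hu fun _ hw =>
    hd ▸ succ_le_degree_of_mem_maximal_mul_veronese hw

lemma notMem_I19 : (![4,3,0,0] : Mon 4) ∉ I19 := fun h =>
  absurd (le_degree_inf_of_mem_veronese (mulIdeal_veronese_subset _ h)) (by decide)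

/-- `I = m·I_{(6;3,2,1,4)}` does not have the strong exchange property:
`x_1^4 x_2^2 x_3` and `x_2^3 x_4^4` are minimal generators of `I`, but `x_1^4 x_2^3`
is not a minimal generator of `I`. -/
theorem stmt_19 :
    (![4,2,1,0] : Mon 4) ∈ minGens I19 ∧
    (![0,3,0,4] : Mon 4) ∈ minGens I19 ∧
    (![4,3,0,0] : Mon 4) ∉ minGens I19 ∧
    ¬ StrongExchange I19 := by
  have hu : (![4,2,1,0] : Mon 4) ∈ minGens I19 :=
    mem_minGens_I19_of_degree_eq_seven
      ⟨![1,0,0,0], by decide, ![3,2,1,0],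
        ⟨![3,2,1,0], by decide, by decide, le_rfl⟩, by decide⟩
      (by decide)
  have hv : (![0,3,0,4] : Mon 4) ∈ minGens I19 :=
    mem_minGens_I19_of_degree_eq_seven
      ⟨![0,1,0,0], by decide, ![0,2,0,4],
        ⟨![0,2,0,4], by decide, by decide, le_rfl⟩, by decide⟩
      (by decide)
  have hexch : exch (![4,2,1,0] : Mon 4) 2 1 = ![4,3,0,0] := by decide
  refine ⟨hu, hv, fun h => notMem_I19 h.1, fun hSE => notMem_I19 ?_⟩
  exact hexch ▸ hSE _ hu _ hv 2 1 (by decide) (by decide)
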